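/- arXiv:cs/0511072 — 8 statements merged into one kernel-verified Lean document; each statement's English description precedes it below -/
import Mathlib

section
/- Let F = F_q and γ a primitive element of F. Then for every polynomial f(X) ∈ F[X] of degree less than q-1, f(X)^q ≡ f(γX) (mod X^{q-1} - γ), and in fact f(X)^q mod (X^{q-1} - γ) = f(γX). -/
/-- Let `F = F_q` and `γ` a primitive element of `F`. For every polynomial
`f ∈ F[X]` of degree less than `q-1`, `f(X)^q ≡ f(γX) (mod X^(q-1) - γ)`,
and in fact `f(X)^q mod (X^(q-1) - γ) = f(γX)`. -/
theorem stmt_1 {F : Type*} [Field F] [Fintype F] (γ : Fˣ)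
    (hγ : ∀ x : Fˣ, x ∈ Subgroup.zpowers γ)
    (f : Polynomial F)
    (hf : f.degree < ((Fintype.card F - 1 : ℕ) : WithBot ℕ)) :
    (Polynomial.X ^ (Fintype.card F - 1) - Polynomial.C (γ : F)) ∣
        (f ^ Fintype.card F - f.comp (Polynomial.C (γ : F) * Polynomial.X)) ∧
    f ^ Fintype.card F %ₘ (Polynomial.X ^ (Fintype.card F - 1) - Polynomial.C (γ : F)) =
        f.comp (Polynomial.C (γ : F) * Polynomial.X) := by
  classical
  set q := Fintype.card F with hq
  have hq2 : 2 ≤ q := Fintype.one_lt_card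
  have hq1 : q - 1 ≠ 0 := by omega
  set E : Polynomial F := Polynomial.X ^ (q - 1) - Polynomial.C (γ : F) with hE
  have hmonic : E.Monic := Polynomial.monic_X_pow_sub_C _ hq1
  have hdegE : E.degree = (q - 1 : ℕ) :=
    Polynomial.degree_X_pow_sub_C (Nat.pos_of_ne_zero hq1) _
  -- E divides X^q - C γ * X
  have h1 : E ∣ (Polynomial.X ^ q - Polynomial.C (γ : F) * Polynomial.X) := by
    refine ⟨Polynomial.X, ?_⟩
    rw [hE, sub_mul, ← pow_succ, Nat.sub_add_cancel (by omega)]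
  -- f ^ q = f.comp (X ^ q)
  have h2 : f ^ q = f.comp (Polynomial.X ^ q) := by
    rw [← FiniteField.expand_card f, Polynomial.expand_eq_comp_X_pow]
  -- divisibility of difference of comps
  have h3 : E ∣ (f ^ q - f.comp (Polynomial.C (γ : F) * Polynomial.X)) := by
    rw [h2]
    refine dvd_trans h1 ?_
    have := Polynomial.sub_dvd_eval_sub (Polynomial.X ^ q)
      (Polynomial.C (γ : F) * Polynomial.X) (f.map Polynomial.C)
    simpa [Polynomial.eval_map, Polynomial.comp] using this
  refine ⟨h3, ?_⟩
  have hdegcomp : (f.comp (Polynomial.C (γ : F) * Polynomial.X)).degree < E.degree := by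
    rw [hdegE]
    rcases eq_or_ne f 0 with rfl | hf0
    · simp only [Polynomial.zero_comp, Polynomial.degree_zero]
      exact WithBot.bot_lt_coe _
    · refine lt_of_le_of_lt (Polynomial.degree_le_natDegree) ?_
      have hdeg1 : (Polynomial.C (γ : F) * Polynomial.X).natDegree = 1 := by
        rw [Polynomial.natDegree_C_mul (by exact_mod_cast γ.ne_zero), Polynomial.natDegree_X]
      rw [Polynomial.natDegree_comp, hdeg1, mul_one]
      rw [Polynomial.degree_eq_natDegree hf0, Nat.cast_lt] at hf
      exact_mod_cast hf
  have key : f ^ q = (f ^ q - f.comp (Polynomial.C (γ : F) * Polynomial.X)) +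
      f.comp (Polynomial.C (γ : F) * Polynomial.X) := by ring
  rw [key, Polynomial.add_modByMonic,
    (Polynomial.modByMonic_eq_zero_iff_dvd hmonic).2 h3, zero_add,
    (Polynomial.modByMonic_eq_self_iff hmonic).2 hdegcomp]
end

section
/- Let Q(X,Y1,Y2) ∈ F[X,Y1,Y2] be a nonzero polynomial of (1,k,k)-weighted degree at most D that has a zero of multiplicity r at each of n0 points (α_i, y_{i1}, y_{i2}) ∈ F^3. Let f(X), g(X) be polynomials of degree at most k such that for at least t > D/r indices i, both f(α_i) = y_{i1} and g(α_i) = y_{i2}, where the α_i in these agreeing indices are distinct. Then Q(X, f(X), g(X)) is identically zero. -/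
/-- `Q` has a zero of multiplicity `r` at the point `p`: the shifted polynomial
`Q(X₁ + p₁, …)` has no monomial of total degree less than `r`. -/
def HasZeroOfMultiplicity {F : Type*} [CommRing F] {σ : Type*}
    (Q : MvPolynomial σ F) (r : ℕ) (p : σ → F) : Prop :=
  ∀ d ∈ (MvPolynomial.aeval
      (fun i => MvPolynomial.X i + MvPolynomial.C (p i)) Q).support,
    r ≤ d.sum fun _ e => e

/-- If a nonzero trivariate `Q` of `(1,k,k)`-weighted degree at most `D` vanishes with
multiplicity `r` at points `(α_i, y_{i1}, y_{i2})`, and polynomials `f, g` of degree at most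
`k` satisfy `f(α_i) = y_{i1}` and `g(α_i) = y_{i2}` for at least `t > D/r` indices `i`
with distinct `α_i`, then `Q(X, f(X), g(X)) ≡ 0`. -/
theorem stmt_4 {F : Type*} [Field F] (k D r n0 : ℕ) (hr : 1 ≤ r)
    (Q : MvPolynomial (Fin 3) F) (hQ : Q ≠ 0)
    (hdeg : MvPolynomial.weightedTotalDegree ![1, k, k] Q ≤ D)
    (α y1 y2 : Fin n0 → F)
    (hmult : ∀ i, HasZeroOfMultiplicity Q r ![α i, y1 i, y2 i])
    (f g : Polynomial F) (hfdeg : f.natDegree ≤ k) (hgdeg : g.natDegree ≤ k)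
    (S : Finset (Fin n0))
    (hSagree : ∀ i ∈ S, f.eval (α i) = y1 i ∧ g.eval (α i) = y2 i)
    (hSdistinct : Set.InjOn α S)
    (hScard : D < r * S.card) :
    MvPolynomial.aeval ![Polynomial.X, f, g] Q = 0 := by
  classical
  set P : Polynomial F := MvPolynomial.aeval ![Polynomial.X, f, g] Q with hPdef
  by_contra hPne
  -- Step 1: natDegree P ≤ D
  have hdegP : P.natDegree ≤ D := by
    rw [hPdef, MvPolynomial.aeval_def, MvPolynomial.eval₂_eq']
    apply Polynomial.natDegree_sum_le_of_forall_le
    intro d hd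
    have hw : (Finsupp.weight ![1, k, k]) d ≤ D :=
      le_trans (MvPolynomial.le_weightedTotalDegree _ hd) hdeg
    have hw' : d 0 * 1 + d 1 * k + d 2 * k ≤ D := by
      rw [Finsupp.weight_apply, Finsupp.sum_fintype _ _ (fun i => by simp),
        Fin.sum_univ_three] at hw
      simpa [smul_eq_mul] using hw
    calc (algebraMap F (Polynomial F) (Q.coeff d) *
            ∏ i, (![Polynomial.X, f, g] i) ^ d i).natDegree
        ≤ (algebraMap F (Polynomial F) (Q.coeff d)).natDegree +
            (∏ i, (![Polynomial.X, f, g] i) ^ d i).natDegree :=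
          Polynomial.natDegree_mul_le
      _ ≤ 0 + (∏ i, (![Polynomial.X, f, g] i) ^ d i).natDegree := by
          rw [Polynomial.algebraMap_eq]; simp [Polynomial.natDegree_C]
      _ = (Polynomial.X ^ d 0 * f ^ d 1 * g ^ d 2 : Polynomial F).natDegree := by
          rw [zero_add, Fin.prod_univ_three]
          simp [Matrix.cons_val_zero, Matrix.cons_val_one]
      _ ≤ (Polynomial.X ^ d 0 * f ^ d 1 : Polynomial F).natDegree +
            (g ^ d 2 : Polynomial F).natDegree := Polynomial.natDegree_mul_le
      _ ≤ ((Polynomial.X ^ d 0 : Polynomial F).natDegree +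
            (f ^ d 1 : Polynomial F).natDegree) +
            (g ^ d 2 : Polynomial F).natDegree := by
          exact Nat.add_le_add_right Polynomial.natDegree_mul_le _
      _ ≤ d 0 * 1 + d 1 * k + d 2 * k := by
          have h1 : (Polynomial.X ^ d 0 : Polynomial F).natDegree = d 0 := by
            simp [Polynomial.natDegree_X_pow]
          have h2 : (f ^ d 1 : Polynomial F).natDegree ≤ d 1 * k := by
            refine le_trans Polynomial.natDegree_pow_le ?_
            exact Nat.mul_le_mul_left _ hfdeg
          have h3 : (g ^ d 2 : Polynomial F).natDegree ≤ d 2 * k := by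
            refine le_trans Polynomial.natDegree_pow_le ?_
            exact Nat.mul_le_mul_left _ hgdeg
          omega
      _ ≤ D := hw'
  -- Step 2: for i ∈ S, (X - C (α i))^r divides P
  have hdvd : ∀ i ∈ S, (Polynomial.X - Polynomial.C (α i)) ^ r ∣ P := by
    intro i hi
    obtain ⟨hf, hg⟩ := hSagree i hi
    set p : Fin 3 → F := ![α i, y1 i, y2 i] with hp
    set Q' : MvPolynomial (Fin 3) F :=
      MvPolynomial.aeval (fun j => MvPolynomial.X j + MvPolynomial.C (p j)) Q with hQ'
    set v : Fin 3 → Polynomial F :=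
      ![Polynomial.X - Polynomial.C (α i), f - Polynomial.C (y1 i),
        g - Polynomial.C (y2 i)] with hv
    have hfun : (fun j => MvPolynomial.aeval v (MvPolynomial.X j + MvPolynomial.C (p j)))
        = ![Polynomial.X, f, g] := by
      funext j
      fin_cases j <;> simp [hv, hp, sub_add_cancel]
    have hPQ' : MvPolynomial.aeval v Q' = P := by
      rw [hQ', MvPolynomial.comp_aeval_apply, hfun, hPdef]
    rw [← hPQ', MvPolynomial.aeval_def, MvPolynomial.eval₂_eq']
    apply Finset.dvd_sum
    intro d hd
    have hr' : r ≤ ∑ j, d j := by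
      have := hmult i d hd
      rwa [Finsupp.sum_fintype _ _ (fun _ => rfl)] at this
    have hdj : ∀ j : Fin 3, (Polynomial.X - Polynomial.C (α i)) ∣ v j := by
      intro j
      have h1 : (Polynomial.X - Polynomial.C (α i)) ∣ f - Polynomial.C (y1 i) :=
        Polynomial.dvd_iff_isRoot.mpr (by simp [Polynomial.IsRoot, hf])
      have h2 : (Polynomial.X - Polynomial.C (α i)) ∣ g - Polynomial.C (y2 i) :=
        Polynomial.dvd_iff_isRoot.mpr (by simp [Polynomial.IsRoot, hg])
      fin_cases j
      · simpa [hv] using dvd_rfl (a := Polynomial.X - Polynomial.C (α i))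
      · simpa [hv] using h1
      · simpa [hv] using h2
    have key : (Polynomial.X - Polynomial.C (α i)) ^ (∑ j, d j) ∣ ∏ j, v j ^ d j := by
      rw [← Finset.prod_pow_eq_pow_sum]
      exact Finset.prod_dvd_prod_of_dvd _ _ fun j _ => pow_dvd_pow_of_dvd (hdj j) _
    exact Dvd.dvd.mul_left ((pow_dvd_pow _ hr').trans key) _
  -- Step 3: the product divides P
  have hprod : (∏ i ∈ S, (Polynomial.X - Polynomial.C (α i)) ^ r) ∣ P := by
    apply Finset.prod_dvd_of_coprime
    · intro i hi j hj hij
      apply IsCoprime.pow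
      apply Polynomial.isCoprime_X_sub_C_of_isUnit_sub
      have : α i ≠ α j := fun h => hij (hSdistinct hi hj h)
      exact (sub_ne_zero.mpr this).isUnit
    · exact hdvd
  -- Step 4: degree count
  have hndeg : (∏ i ∈ S, (Polynomial.X - Polynomial.C (α i)) ^ r).natDegree = r * S.card := by
    rw [Polynomial.natDegree_prod _ _ fun i _ =>
      pow_ne_zero _ (Polynomial.X_sub_C_ne_zero (α i))]
    simp [Polynomial.natDegree_pow, Polynomial.natDegree_X_sub_C, Finset.sum_const,
      mul_comm]
  have := Polynomial.natDegree_le_of_dvd hprod hPne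
  omega
end

section
/- Given any n0 points in F^3 and integers r ≥ 1, D, k ≥ 1 satisfying D^3 / (6k^2) > n0 · C(r+2, 3), there exists a nonzero polynomial Q(X,Y1,Y2) over F of (1,k,k)-weighted degree at most D having a zero of multiplicity r at each of the n0 points. -/
open Finset

namespace Finsupp

variable {σ : Type*} [Fintype σ]

theorem card_degree_lt [Nonempty σ] (n : ℕ) :
    #(finite_of_degree_lt (σ := σ) n).toFinset =
      (n + Fintype.card σ - 1).choose (Fintype.card σ) := by
  classical
  have hunion : (finite_of_degree_lt (σ := σ) n).toFinset =
      (range n).biUnion fun j => univ.finsuppAntidiag j := by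
    ext d
    simp [degree_eq_sum]
  obtain ⟨m, hm⟩ : ∃ m, Fintype.card σ = m + 1 := Nat.exists_eq_add_one.mpr Fintype.card_pos
  rw [hunion, card_biUnion (fun i _ j _ hij => disjoint_left.mpr fun d hi hj => by simp_all)]
  simp_rw [card_finsuppAntidiag_nat_eq_choose, card_univ, hm]
  cases n with
  | zero => simp
  | succ n =>
    rw [show n + 1 + (m + 1) - 1 = n + m + 1 by omega, ← Nat.sum_range_add_choose]
    refine Finset.sum_congr rfl fun j _ => ?_
    rw [show m + 1 + j - 1 = j + m by omega, Nat.choose_symm_add]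

theorem card_degree_le [Nonempty σ] (n : ℕ) :
    #(finite_of_degree_le (σ := σ) n).toFinset = (n + Fintype.card σ).choose (Fintype.card σ) := by
  have : (finite_of_degree_le (σ := σ) n).toFinset = (finite_of_degree_lt (n + 1)).toFinset := by
    ext d
    simp
  rw [this, card_degree_lt, Nat.add_right_comm, Nat.add_sub_cancel]

/-- `d` is recovered from the quotients `d i / w i`, a monomial of `w`-weight at most
`degree d`, and the remainders `d i % w i`, of which there are `∏ i, w i` choices. -/
theorem card_degree_le_le_prod_mul_card_weight_le (w : σ → ℕ) (hw : ∀ i, w i ≠ 0) (n : ℕ) :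
    #(finite_of_degree_le (σ := σ) n).toFinset ≤
      (∏ i, w i) * #(finite_of_nat_weight_le w hw n).toFinset := by
  classical
  let q : (σ →₀ ℕ) → (σ →₀ ℕ) × (σ → ℕ) := fun d =>
    (equivFunOnFinite.symm fun i => d i / w i, fun i => d i % w i)
  calc _ ≤ #((finite_of_nat_weight_le w hw n).toFinset ×ˢ
        Fintype.piFinset fun i => range (w i)) := by
        refine card_le_card_of_injOn q (fun d hd => ?_) fun d _ e _ hde => ?_
        · simp only [Set.Finite.coe_toFinset, Set.mem_ofPred_eq, degree_eq_sum] at hd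
          simp only [q, coe_product, Set.mem_prod, Set.Finite.coe_toFinset, Set.mem_ofPred_eq,
            weight_eq_sum, coe_equivFunOnFinite_symm, smul_eq_mul, Fintype.coe_piFinset,
            Set.mem_pi, Set.mem_univ, coe_range, Set.mem_Iio, forall_const]
          exact ⟨(Finset.sum_le_sum fun i _ => Nat.div_mul_le_self _ _).trans hd,
            fun i => Nat.mod_lt _ (Nat.pos_of_ne_zero (hw i))⟩
        · simp only [q, Prod.mk.injEq, Finsupp.ext_iff, coe_equivFunOnFinite_symm,
            funext_iff] at hde
          ext i
          rw [← Nat.div_add_mod (d i) (w i), ← Nat.div_add_mod (e i) (w i), hde.1, hde.2]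
    _ = _ := by rw [card_product, Fintype.card_piFinset, mul_comm]; simp

end Finsupp

theorem Nat.pow_three_le_six_mul_choose (n : ℕ) : n ^ 3 ≤ 6 * (n + 3).choose 3 :=
  calc n ^ 3 ≤ (n + 3 + 1 - 3) ^ 3 := Nat.pow_le_pow_left (by omega) 3
    _ ≤ (n + 3).descFactorial 3 := Nat.pow_sub_le_descFactorial _ 3
    _ = 6 * (n + 3).choose 3 := Nat.descFactorial_eq_factorial_mul_choose _ _

namespace MvPolynomial

open Module Finsupp

theorem hasZeroOfMultiplicity_iff {R σ : Type*} [CommRing R] {Q : MvPolynomial σ R} {r : ℕ}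
    {p : σ → R} :
    HasZeroOfMultiplicity Q r p ↔
      ∀ d : σ →₀ ℕ, degree d < r → coeff d (aeval (fun i => X i + C (p i)) Q) = 0 :=
  forall_congr' fun d => by rw [mem_support_iff, not_imp_comm, not_le]; rfl

theorem exists_ne_zero_support_subset_hasZeroOfMultiplicity {F σ ι : Type*} [Field F]
    [Finite σ] [Fintype ι] (p : ι → σ → F) (r : ℕ) (B : Finset (σ →₀ ℕ))
    (hB : Fintype.card ι * #(finite_of_degree_lt (σ := σ) r).toFinset < #B) :
    ∃ Q : MvPolynomial σ F, Q ≠ 0 ∧ Q.support ⊆ B ∧ ∀ i, HasZeroOfMultiplicity Q r (p i) := by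
  classical
  let L := (finite_of_degree_lt (σ := σ) r).toFinset
  let Φ : restrictSupport F (B : Set (σ →₀ ℕ)) →ₗ[F] (ι × L → F) :=
    LinearMap.pi fun x =>
      lcoeff F x.2.1 ∘ₗ (aeval fun j => X j + C (p x.1 j)).toLinearMap ∘ₗ Submodule.subtype _
  have hrank : finrank F (ι × L → F) < finrank F (restrictSupport F (B : Set (σ →₀ ℕ))) := by
    rw [finrank_fintype_fun_eq_card, Fintype.card_prod, Fintype.card_coe,
      finrank_eq_card_basis (basisRestrictSupport F _)]
    simpa using hB
  have : FiniteDimensional F (restrictSupport F (B : Set (σ →₀ ℕ))) :=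
    .of_basis (basisRestrictSupport F _)
  obtain ⟨⟨Q, hQB⟩, hQ, hQ0⟩ :=
    Submodule.exists_mem_ne_zero_of_ne_bot (LinearMap.ker_ne_bot_of_finrank_lt hrank)
  refine ⟨Q, fun h => hQ0 (Subtype.ext h), coe_subset.mp hQB,
    fun i => hasZeroOfMultiplicity_iff.mpr fun d hd => ?_⟩
  exact congrFun ((LinearMap.mem_ker (f := Φ)).mp hQ)
    (i, ⟨d, (Set.Finite.mem_toFinset _).mpr hd⟩)

end MvPolynomial

theorem stmt_7_general {F : Type*} [Field F] (n0 r D k : ℕ) (hk : 1 ≤ k)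
    (p : Fin n0 → Fin 3 → F)
    (hcond : 6 * k ^ 2 * (n0 * Nat.choose (r + 2) 3) < D ^ 3) :
    ∃ Q : MvPolynomial (Fin 3) F, Q ≠ 0 ∧
      MvPolynomial.weightedTotalDegree ![1, k, k] Q ≤ D ∧
      ∀ i, HasZeroOfMultiplicity Q r (p i) := by
  have hw : ∀ i, ![1, k, k] i ≠ 0 := by
    simpa [Fin.forall_fin_succ] using Nat.one_le_iff_ne_zero.mp hk
  set W := (Finsupp.finite_of_nat_weight_le ![1, k, k] hw D).toFinset
  have hsimplex : (D + 3).choose 3 ≤ k ^ 2 * #W := by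
    simpa [Finsupp.card_degree_le, Fin.prod_univ_three, sq] using
      Finsupp.card_degree_le_le_prod_mul_card_weight_le ![1, k, k] hw D
  have hW : n0 * (r + 2).choose 3 < #W := by
    by_contra! h
    have : D ^ 3 ≤ 6 * k ^ 2 * (n0 * (r + 2).choose 3) :=
      calc D ^ 3 ≤ 6 * (D + 3).choose 3 := Nat.pow_three_le_six_mul_choose D
        _ ≤ 6 * (k ^ 2 * #W) := by gcongr
        _ ≤ 6 * k ^ 2 * (n0 * (r + 2).choose 3) := by rw [← mul_assoc]; gcongr
    omega
  obtain ⟨Q, hQ0, hQW, hQr⟩ :=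
    MvPolynomial.exists_ne_zero_support_subset_hasZeroOfMultiplicity p r W
      (by simpa [Finsupp.card_degree_lt] using hW)
  refine ⟨Q, hQ0, Finset.sup_le fun d hd => ?_, hQr⟩
  simpa [W] using hQW hd

/-- Given `n0` points in `F³` and parameters with `D³/(6k²) > n0 · C(r+2,3)`, there is a
nonzero trivariate polynomial of `(1,k,k)`-weighted degree at most `D` with a zero of
multiplicity `r` at each point. -/
theorem stmt_7 {F : Type*} [Field F] (n0 r D k : ℕ) (hr : 1 ≤ r) (hk : 1 ≤ k)
    (p : Fin n0 → Fin 3 → F)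
    (hcond : 6 * k ^ 2 * (n0 * Nat.choose (r + 2) 3) < D ^ 3) :
    ∃ Q : MvPolynomial (Fin 3) F, Q ≠ 0 ∧
      MvPolynomial.weightedTotalDegree ![1, k, k] Q ≤ D ∧
      ∀ i, HasZeroOfMultiplicity Q r (p i) :=
  stmt_7_general n0 r D k hk p hcond
end

section
/- The number of triples (i, j1, j2) of nonnegative integers with i + k·j1 + k·j2 ≤ D equals k·C(a+2, 3) + (D - a·k + 1)·C(a+2, 2), where a = ⌊D/k⌋. -/
open Finset

lemma aux_ite (D c : ℕ) :
    ∑ i ∈ range (D+1), (if i + c ≤ D then (1:ℕ) else 0) = D + 1 - c := by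
  rw [Finset.sum_boole]
  have : (range (D+1)).filter (fun i => i + c ≤ D) = range (D+1-c) := by
    ext i; simp [Finset.mem_range]; omega
  simp [this]

lemma aux_swap (n : ℕ) (F : ℕ → ℕ) (hF : ∀ c, n ≤ c → F c = 0) :
    ∑ j1 ∈ range n, ∑ j2 ∈ range n, F (j1 + j2) = ∑ s ∈ range n, (s+1) * F s := by
  have step1 : ∀ j1 ∈ range n, ∑ j2 ∈ range n, F (j1+j2)
      = ∑ t ∈ range n, if j1 ≤ t then F t else 0 := by
    intro j1 hj1
    rw [← Finset.sum_filter]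
    have h : (range n).filter (fun t => j1 ≤ t) = Finset.Ico j1 n := by
      ext t; simp [Finset.mem_range, Finset.mem_Ico]; omega
    rw [h, Finset.sum_Ico_eq_sum_range]
    simp only [Finset.mem_range] at hj1
    refine (Finset.sum_subset ?_ ?_).symm
    · intro x hx; simp at hx ⊢; omega
    · intro x hx hx'
      apply hF
      simp at hx hx'
      omega
  rw [Finset.sum_congr rfl step1, Finset.sum_comm]
  apply Finset.sum_congr rfl
  intro t ht
  rw [← Finset.sum_filter]
  have h : (range n).filter (fun j1 => j1 ≤ t) = range (t+1) := by
    simp at ht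
    ext j1; simp [Nat.lt_succ_iff]; omega
  rw [h, Finset.sum_const, Finset.card_range, smul_eq_mul]

lemma aux_sum (k : ℕ) (hk : 1 ≤ k) : ∀ a D : ℕ, k * a ≤ D →
    ∑ s ∈ range (a+1), (s+1) * (D + 1 - k * s)
      = k * Nat.choose (a+2) 3 + (D - a*k + 1) * Nat.choose (a+2) 2 := by
  intro a
  induction a with
  | zero => intro D hD; simp [Nat.choose]
  | succ a ih =>
    intro D hD
    have h1 : k * a ≤ D := by nlinarith
    have h2 : k * (a+1) ≤ D := hD
    rw [Finset.sum_range_succ, ih D h1]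
    have hc3 : Nat.choose (a+3) 3 = Nat.choose (a+2) 2 + Nat.choose (a+2) 3 :=
      Nat.choose_succ_succ (a+2) 2
    have hc2 : Nat.choose (a+3) 2 = (a+2) + Nat.choose (a+2) 2 := by
      rw [Nat.choose_succ_succ (a+2) 1, Nat.choose_one_right]
    have e1 : a + 1 + 2 = a + 3 := by omega
    rw [e1, hc3, hc2]
    have hs1 : a * k ≤ D := by nlinarith
    have hs2 : (a+1) * k ≤ D := by nlinarith
    have hs3 : k * (a+1) ≤ D + 1 := by omega
    zify [hs1, hs2, hs3]
    ring

/-- The number of triples `(i, j₁, j₂)` of nonnegative integers with `i + k·j₁ + k·j₂ ≤ D`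
equals `k·C(a+2,3) + (D - a·k + 1)·C(a+2,2)` where `a = ⌊D/k⌋`. -/
theorem stmt_9 (k D : ℕ) (hk : 1 ≤ k) :
    Nat.card {t : ℕ × ℕ × ℕ // t.1 + k * t.2.1 + k * t.2.2 ≤ D} =
      k * Nat.choose (D / k + 2) 3 + (D - (D / k) * k + 1) * Nat.choose (D / k + 2) 2 := by
  set a := D / k with ha
  set S : Finset (ℕ × ℕ × ℕ) :=
    (range (D+1) ×ˢ range (D+1) ×ˢ range (D+1)).filter
      (fun t => t.1 + k * t.2.1 + k * t.2.2 ≤ D) with hS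
  have hmem : ∀ t : ℕ × ℕ × ℕ, (t.1 + k * t.2.1 + k * t.2.2 ≤ D) ↔ t ∈ S := by
    intro t
    have h1 : t.2.1 ≤ k * t.2.1 := Nat.le_mul_of_pos_left _ hk
    have h2 : t.2.2 ≤ k * t.2.2 := Nat.le_mul_of_pos_left _ hk
    simp [hS, Finset.mem_filter, Finset.mem_product, Finset.mem_range]
    omega
  rw [Nat.card_congr (Equiv.subtypeEquivRight hmem), Nat.card_eq_finsetCard,
    hS, Finset.card_filter]
  rw [Finset.sum_product, Finset.sum_comm, Finset.sum_product]
  set F : ℕ → ℕ := fun c => D + 1 - k * c with hFdef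
  have hF : ∀ c, D + 1 ≤ c → F c = 0 := by
    intro c hc
    have : c ≤ k * c := Nat.le_mul_of_pos_left _ hk
    simp only [hFdef]; omega
  have step : ∀ j1 ∈ range (D+1), ∑ j2 ∈ range (D+1), ∑ i ∈ range (D+1),
      (if (i, j1, j2).1 + k * (i, j1, j2).2.1 + k * (i, j1, j2).2.2 ≤ D then (1:ℕ) else 0)
      = ∑ j2 ∈ range (D+1), F (j1 + j2) := by
    intro j1 _
    apply Finset.sum_congr rfl
    intro j2 _
    have e : ∀ i : ℕ, i + k * j1 + k * j2 = i + (k * j1 + k * j2) := by intro i; ring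
    simp only [e]
    rw [aux_ite D (k * j1 + k * j2)]
    simp only [hFdef, Nat.mul_add]
  rw [Finset.sum_congr rfl step, aux_swap (D+1) F hF]
  have hsub : ∑ s ∈ range (D+1), (s+1) * F s = ∑ s ∈ range (a+1), (s+1) * F s := by
    refine (Finset.sum_subset ?_ ?_).symm
    · apply Finset.range_subset_range.mpr
      have := Nat.div_le_self D k
      omega
    · intro s hs hs'
      simp only [Finset.mem_range] at hs hs'
      have h1 : D < k * (a + 1) := by
        rw [ha]
        exact Nat.lt_mul_div_succ D hk
      have h2 : k * (a+1) ≤ k * s := Nat.mul_le_mul_left k (by omega)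
      have : F s = 0 := by simp only [hFdef]; omega
      simp [this]
  rw [hsub]
  have hka : k * a ≤ D := by rw [ha, Nat.mul_comm]; exact Nat.div_mul_le_self D k
  exact aux_sum k hk a D hka
end

section
/- Let F = F_q, γ primitive in F, and let Q(X,Y1,Y2) ∈ F[X,Y1,Y2] be nonzero with Y1-degree less than q and not divisible by E(X) = X^{q-1} - γ (as a polynomial in Y1, Y2 with coefficients in F[X]). Let T(Y1,Y2) be the reduction of Q modulo E(X) over the extension field K = F[X]/(E(X)). Then the univariate polynomial R(Y1) = T(Y1, Y1^q) over K is nonzero. -/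
/-- Let `F = F_q`, `γ` primitive, and `Q(X,Y₁,Y₂)` nonzero (viewed as a polynomial in
`Y₁,Y₂` over `F[X]`) with `Y₁`-degree less than `q` and not divisible by
`E(X) = X^(q-1) - γ`. Then the reduction `T(Y₁,Y₂)` of `Q` modulo `E(X)` over
`K = F[X]/(E(X))` yields a nonzero univariate polynomial `R(Y₁) = T(Y₁, Y₁^q)`. -/
theorem stmt_10 {F : Type*} [Field F] [Fintype F] (γ : Fˣ)
    (hγ : ∀ x : Fˣ, x ∈ Subgroup.zpowers γ)
    (E : Polynomial F)
    (hE : E = Polynomial.X ^ (Fintype.card F - 1) - Polynomial.C (γ : F))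
    (Q : MvPolynomial (Fin 2) (Polynomial F)) (hQ : Q ≠ 0)
    (hdegY1 : MvPolynomial.degreeOf 0 Q < Fintype.card F)
    (hndvd : ¬ MvPolynomial.C E ∣ Q) :
    MvPolynomial.aeval
      ![(Polynomial.X : Polynomial (Polynomial F ⧸ Ideal.span {E})),
        Polynomial.X ^ Fintype.card F]
      (MvPolynomial.map (Ideal.Quotient.mk (Ideal.span {E})) Q) ≠ 0 := by
  classical
  set q := Fintype.card F with hq
  set T := MvPolynomial.map (Ideal.Quotient.mk (Ideal.span {E})) Q with hT
  -- T ≠ 0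
  have hTne : T ≠ 0 := by
    intro h
    apply hndvd
    rw [MvPolynomial.C_dvd_iff_dvd_coeff]
    intro i
    have : T.coeff i = 0 := by rw [h]; simp
    rw [hT, MvPolynomial.coeff_map] at this
    rw [← Ideal.mem_span_singleton]
    exact Ideal.Quotient.eq_zero_iff_mem.mp this
  -- supports: every d in T.support has d 0 < q
  have hsupp : ∀ d ∈ T.support, d 0 < q := by
    intro d hd
    have hdQ : d ∈ Q.support := by
      by_contra hdQ
      have := MvPolynomial.notMem_support_iff.mp hdQ
      have : T.coeff d = 0 := by
        rw [hT, MvPolynomial.coeff_map, this]; simp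
      exact MvPolynomial.notMem_support_iff.mpr this hd
    have := MvPolynomial.degreeOf_lt_iff (Fintype.card_pos (α := F)) |>.mp hdegY1 d hdQ
    exact this
  obtain ⟨d, hd⟩ := Finset.nonempty_iff_ne_empty.mpr
    (fun h => hTne (MvPolynomial.support_eq_empty.mp h))
  intro hR
  -- compute the coefficient of X^(d 0 + q * d 1) in the aeval
  have key : (MvPolynomial.aeval
      ![(Polynomial.X : Polynomial (Polynomial F ⧸ Ideal.span {E})),
        Polynomial.X ^ q] T).coeff (d 0 + q * d 1) = T.coeff d := by
    rw [MvPolynomial.aeval_def, MvPolynomial.eval₂_eq']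
    rw [Polynomial.finset_sum_coeff]
    rw [Finset.sum_eq_single d]
    · simp only [Fin.prod_univ_two, Matrix.cons_val_zero, Matrix.cons_val_one,
        Matrix.head_cons]
      rw [← pow_mul, ← pow_add]
      rw [← Polynomial.C_eq_algebraMap, Polynomial.coeff_C_mul, Polynomial.coeff_X_pow]
      simp
    · intro d' hd' hne
      simp only [Fin.prod_univ_two, Matrix.cons_val_zero, Matrix.cons_val_one,
        Matrix.head_cons]
      rw [← pow_mul, ← pow_add]
      rw [← Polynomial.C_eq_algebraMap, Polynomial.coeff_C_mul, Polynomial.coeff_X_pow]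
      have hne2 : d' 0 + q * d' 1 ≠ d 0 + q * d 1 := by
        intro heq
        apply hne
        have h0 : d' 0 = d 0 := by
          have h1 := hsupp d' hd'
          have h2 := hsupp d hd
          have := congrArg (· % q) heq
          simpa [Nat.add_mul_mod_self_left, Nat.mod_eq_of_lt h1, Nat.mod_eq_of_lt h2]
            using this
        have h1 : d' 1 = d 1 := by
          rw [h0] at heq
          have hq0 : 0 < q := Fintype.card_pos
          have : q * d' 1 = q * d 1 := by omega
          exact Nat.eq_of_mul_eq_mul_left hq0 this
        ext i
        fin_cases i
        · exact h0
        · exact h1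
      simp only [mul_ite, mul_one, mul_zero, ite_eq_right_iff]
      intro heq
      exact absurd heq.symm hne2
    · intro h
      exact absurd hd h
  rw [hR] at key
  simp at key
  exact MvPolynomial.mem_support_iff.mp hd key.symm
end

section
/- Let F = F_q, γ primitive, E(X) = X^{q-1} - γ, and K = F[X]/(E(X)). If f(X) ∈ F[X] has degree at most k < q-1 and Q(X, f(X), f(γX)) = 0 for Q ∈ F[X,Y1,Y2], then the image Γ of f in K is a root of R(Y1) = T(Y1, Y1^q), where T is the reduction of Q modulo E(X) (after dividing out the largest power of E(X) dividing Q). -/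
/-- Let `F = F_q`, `γ` primitive, `E(X) = X^(q-1) - γ`, `K = F[X]/(E(X))`. If `f ∈ F[X]`
has degree at most `k < q-1` and `Q(X, f(X), f(γX)) = 0` for a nonzero `Q` with
`Q = E^b · Q₀`, `E ∤ Q₀`, then the image `Γ` of `f` in `K` is a root of
`R(Y₁) = T(Y₁, Y₁^q)`, where `T` is the reduction of `Q₀` modulo `E(X)`. -/
theorem stmt_11 {F : Type*} [Field F] [Fintype F] (γ : Fˣ)
    (hγ : ∀ x : Fˣ, x ∈ Subgroup.zpowers γ)
    (E : Polynomial F)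
    (hE : E = Polynomial.X ^ (Fintype.card F - 1) - Polynomial.C (γ : F))
    (k : ℕ) (hk : k < Fintype.card F - 1)
    (f : Polynomial F) (hf : f.natDegree ≤ k)
    (Q Q0 : MvPolynomial (Fin 2) (Polynomial F)) (hQ : Q ≠ 0) (b : ℕ)
    (hfact : Q = (MvPolynomial.C E) ^ b * Q0)
    (hndvd : ¬ MvPolynomial.C E ∣ Q0)
    (heval : MvPolynomial.aeval
        ![f, f.comp (Polynomial.C (γ : F) * Polynomial.X)] Q = 0) :
    Polynomial.eval (Ideal.Quotient.mk (Ideal.span {E}) f)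
      (MvPolynomial.aeval
        ![(Polynomial.X : Polynomial (Polynomial F ⧸ Ideal.span {E})),
          Polynomial.X ^ Fintype.card F]
        (MvPolynomial.map (Ideal.Quotient.mk (Ideal.span {E})) Q0)) = 0 := by
  classical
  set q := Fintype.card F with hq
  have hq2 : 1 < q := Fintype.one_lt_card
  have hE0 : E ≠ 0 := by
    rw [hE]; exact Polynomial.X_pow_sub_C_ne_zero (by omega) _
  set mk : Polynomial F →+* Polynomial F ⧸ Ideal.span {E} :=
    Ideal.Quotient.mk (Ideal.span {E}) with hmk
  -- Step A : evaluation of Q0 at (f, f(γX)) vanishes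
  have hQ0eval : MvPolynomial.aeval
      ![f, f.comp (Polynomial.C (γ : F) * Polynomial.X)] Q0 = 0 := by
    rw [hfact, map_mul, map_pow, MvPolynomial.aeval_C] at heval
    have halg : algebraMap (Polynomial F) (Polynomial F) E = E := rfl
    rw [halg] at heval
    rcases mul_eq_zero.mp heval with h | h
    · exact absurd h (pow_ne_zero b hE0)
    · exact h
  -- Step B : X^q ≡ γ X mod E
  have hEq : mk ((Polynomial.X : Polynomial F) ^ q)
      = mk (Polynomial.C (γ : F) * Polynomial.X) := by
    rw [Ideal.Quotient.mk_eq_mk_iff_sub_mem, Ideal.mem_span_singleton]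
    refine ⟨Polynomial.X, ?_⟩
    rw [hE]
    have hq1 : q - 1 + 1 = q := by omega
    calc (Polynomial.X : Polynomial F) ^ q - Polynomial.C (γ : F) * Polynomial.X
        = Polynomial.X ^ (q - 1 + 1) - Polynomial.C (γ : F) * Polynomial.X := by
          rw [hq1]
      _ = (Polynomial.X ^ (q - 1) - Polynomial.C (γ : F)) * Polynomial.X := by
          ring
  -- Step C : f(γX) ≡ f^q mod E
  have hkey : mk (f ^ q) = mk (f.comp (Polynomial.C (γ : F) * Polynomial.X)) := by
    have h1 : f ^ q = f.comp (Polynomial.X ^ q) := by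
      rw [← FiniteField.expand_card, Polynomial.expand_eq_comp_X_pow]
    rw [h1, Polynomial.comp, Polynomial.comp, Polynomial.hom_eval₂,
      Polynomial.hom_eval₂, hEq]
  -- reduction of the vanishing to the quotient
  have main : MvPolynomial.eval₂
      (mk.comp (algebraMap (Polynomial F) (Polynomial F)))
      (mk ∘ ![f, f.comp (Polynomial.C (γ : F) * Polynomial.X)]) Q0 = 0 := by
    have h := congrArg mk hQ0eval
    rwa [MvPolynomial.aeval_def, MvPolynomial.eval₂_comp_left, map_zero] at h
  -- now rewrite the goal
  calc (Polynomial.eval (mk f)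
      (MvPolynomial.aeval
        ![(Polynomial.X : Polynomial (Polynomial F ⧸ Ideal.span {E})),
          Polynomial.X ^ q]
        (MvPolynomial.map mk Q0)))
      = MvPolynomial.eval₂
          (((Polynomial.evalRingHom (mk f)).comp
            (algebraMap (Polynomial F ⧸ Ideal.span {E})
              (Polynomial (Polynomial F ⧸ Ideal.span {E})))).comp mk)
          (Polynomial.eval (mk f) ∘
            ![(Polynomial.X : Polynomial (Polynomial F ⧸ Ideal.span {E})),
              Polynomial.X ^ q]) Q0 := by
        rw [MvPolynomial.aeval_def]
        rw [show (Polynomial.eval (mk f) : Polynomial (Polynomial F ⧸ Ideal.span {E})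
            → (Polynomial F ⧸ Ideal.span {E}))
          = ⇑(Polynomial.evalRingHom (mk f)) from rfl]
        rw [MvPolynomial.eval₂_comp_left, MvPolynomial.eval₂_map]
    _ = MvPolynomial.eval₂
          (mk.comp (algebraMap (Polynomial F) (Polynomial F)))
          (mk ∘ ![f, f.comp (Polynomial.C (γ : F) * Polynomial.X)]) Q0 := by
        congr 1
        · refine RingHom.ext fun a => ?_
          simp [Polynomial.algebraMap_eq]
        · funext i
          fin_cases i
          · show Polynomial.eval (mk f)
              (Polynomial.X : Polynomial (Polynomial F ⧸ Ideal.span {E})) = mk f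
            simp
          · show Polynomial.eval (mk f)
              ((Polynomial.X : Polynomial (Polynomial F ⧸ Ideal.span {E})) ^ q)
              = mk (f.comp (Polynomial.C (γ : F) * Polynomial.X))
            rw [Polynomial.eval_pow, Polynomial.eval_X, ← map_pow, hkey]
    _ = 0 := main
end

section
/- Let s ≥ 1, and let Q(X, Y1, ..., Ys) be a nonzero polynomial over F of (1,k,...,k)-weighted degree at most D having a zero of multiplicity r at points (α_i, y_{i,1}, ..., y_{i,s}) for i in an index set I with distinct α_i. If f_1, ..., f_s ∈ F[X] are polynomials of degree at most k and there are more than D/r indices i ∈ I with f_j(α_i) = y_{i,j} for all 1 ≤ j ≤ s, then Q(X, f_1(X), ..., f_s(X)) is identically zero. -/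
/-- `(s+1)`-variate generalization: if a nonzero `Q(X, Y₁, …, Y_s)` of
`(1,k,…,k)`-weighted degree at most `D` vanishes with multiplicity `r` at points
`(α_i, y_{i,1}, …, y_{i,s})` with distinct `α_i`, and `f = f₁` with polynomials
`f₁,…,f_s` of degree at most `k` satisfy `f_j(α_i) = y_{i,j}` for all `j` on more than
`D/r` indices `i`, then `Q(X, f₁(X), …, f_s(X)) ≡ 0`. -/
theorem stmt_16 {F : Type*} [Field F] {ι : Type*} (s k D r : ℕ) (hs : 1 ≤ s) (hr : 1 ≤ r)
    (Q : MvPolynomial (Fin (s + 1)) F) (hQ : Q ≠ 0)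
    (hdeg : MvPolynomial.weightedTotalDegree
        (fun i : Fin (s + 1) => if i = 0 then 1 else k) Q ≤ D)
    (α : ι → F) (y : ι → Fin s → F) (hα : Function.Injective α)
    (hmult : ∀ i, HasZeroOfMultiplicity Q r (Fin.cons (α i) (y i)))
    (f : Polynomial F) (fs : Fin s → Polynomial F)
    (hf1 : fs ⟨0, hs⟩ = f) (hfs : ∀ j, (fs j).natDegree ≤ k)
    (S : Finset ι)
    (hSagree : ∀ i ∈ S, ∀ j, (fs j).eval (α i) = y i j)
    (hScard : D < r * S.card) :
    MvPolynomial.aeval (Fin.cons Polynomial.X fs) Q = 0 := by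
  classical
  set w : Fin (s + 1) → ℕ := fun i => if i = 0 then 1 else k with hw
  set v : Fin (s + 1) → Polynomial F := Fin.cons Polynomial.X fs with hv
  set R : Polynomial F := MvPolynomial.aeval v Q with hRdef
  by_contra hR0
  -- degree bound on the substituted polynomials
  have hvdeg : ∀ i, (v i).natDegree ≤ w i := by
    intro i
    refine Fin.cases ?_ ?_ i
    · simp [hv, hw]
    · intro j
      simpa [hv, hw, Fin.succ_ne_zero j] using hfs j
  -- degree bound on R
  have hdegR : R.natDegree ≤ D := by
    rw [hRdef, MvPolynomial.aeval_def, MvPolynomial.eval₂_eq]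
    apply Polynomial.natDegree_sum_le_of_forall_le
    intro d hd
    have halg : algebraMap F (Polynomial F) (Q.coeff d) = Polynomial.C (Q.coeff d) := rfl
    rw [halg]
    refine le_trans (Polynomial.natDegree_C_mul_le _ _) ?_
    refine le_trans (Polynomial.natDegree_prod_le d.support fun i => v i ^ d i) ?_
    have hstep : ∑ i ∈ d.support, ((v i) ^ d i).natDegree ≤ ∑ i ∈ d.support, d i * w i := by
      apply Finset.sum_le_sum
      intro i _
      rw [Polynomial.natDegree_pow]
      exact Nat.mul_le_mul_left _ (hvdeg i)
    refine le_trans hstep ?_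
    have hweight : (Finsupp.weight w d : ℕ) ≤ D := by
      refine le_trans ?_ hdeg
      exact Finset.le_sup (f := fun s => Finsupp.weight w s) hd
    refine le_trans ?_ hweight
    rw [Finsupp.weight_apply, Finsupp.sum]
    simp [smul_eq_mul]
  -- each α i for i ∈ S is a root of multiplicity at least r
  have hdvd : ∀ i ∈ S, (Polynomial.X - Polynomial.C (α i)) ^ r ∣ R := by
    intro i hi
    set p : Fin (s + 1) → F := Fin.cons (α i) (y i) with hp
    set Q' : MvPolynomial (Fin (s + 1)) F :=
      MvPolynomial.aeval
        (fun j => MvPolynomial.X j + MvPolynomial.C (p j)) Q with hQ'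
    set u : Fin (s + 1) → Polynomial F :=
      fun j => v j - Polynomial.C (p j) with hu
    have hcomp : MvPolynomial.aeval u Q' = R := by
      rw [hQ', MvPolynomial.comp_aeval_apply]
      have hfun : (fun j => MvPolynomial.aeval u
          (MvPolynomial.X j + MvPolynomial.C (p j))) = v := by
        funext j
        simp [hu]
      rw [hfun]
    have hudvd : ∀ j, (Polynomial.X - Polynomial.C (α i)) ∣ u j := by
      intro j
      rw [Polynomial.dvd_iff_isRoot]
      refine Fin.cases ?_ ?_ j
      · simp [hu, hv, hp, Polynomial.IsRoot]
      · intro t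
        simp [hu, hv, hp, Polynomial.IsRoot, hSagree i hi t]
    rw [← hcomp, MvPolynomial.aeval_def, MvPolynomial.eval₂_eq]
    apply Finset.dvd_sum
    intro d hd
    apply Dvd.dvd.mul_left
    have h1 : (Polynomial.X - Polynomial.C (α i)) ^ r ∣
        (Polynomial.X - Polynomial.C (α i)) ^ (d.sum fun _ e => e) :=
      pow_dvd_pow _ (hmult i d hd)
    refine h1.trans ?_
    rw [Finsupp.sum, ← Finset.prod_pow_eq_pow_sum]
    exact Finset.prod_dvd_prod_of_dvd _ _ fun j _ => pow_dvd_pow_of_dvd (hudvd j) _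
  have hprod : (∏ i ∈ S, (Polynomial.X - Polynomial.C (α i)) ^ r) ∣ R := by
    apply Finset.prod_dvd_of_coprime
    · intro a _ b _ hab
      exact ((Polynomial.pairwise_coprime_X_sub_C hα) hab).pow
    · exact fun i hi => hdvd i hi
  have hle := Polynomial.natDegree_le_of_dvd hprod hR0
  rw [Polynomial.natDegree_prod] at hle
  · simp only [Polynomial.natDegree_pow, Polynomial.natDegree_X_sub_C, mul_one,
      Finset.sum_const, smul_eq_mul] at hle
    rw [mul_comm] at hle
    exact absurd (le_trans hle hdegR) (not_le.mpr hScard)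
  · intro i _
    exact pow_ne_zero _ (Polynomial.X_sub_C_ne_zero _)
end

section
/- Given n0 points in F^{s+1} and parameters r, D, k with D^{s+1} / ((s+1)!·k^s) > n0 · C(r+s, s+1), there exists a nonzero polynomial Q(X, Y1, ..., Ys) over F of (1,k,...,k)-weighted degree at most D that has a zero of multiplicity r at each of the n0 points. -/
/-!
Vanishing to order `r` at a point imposes one linear condition on the coefficients of `Q` for
each monomial of degree `< r`, i.e. `C(r+s, s+1)` conditions, so a nonzero solution exists as
soon as there are more than `n0 · C(r+s, s+1)` admissible monomials. Those of weighted degree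
`≤ D` are counted from below by dividing the `Y`-exponents of the `C(D+s, s+1)` monomials of
total degree `< D` by `k`, which is at most `k^s`-to-one, and `D^(s+1) ≤ (s+1)! · C(D+s, s+1)`.
-/

open Finset MvPolynomial

namespace Finsupp

variable {σ : Type*} [Fintype σ]

noncomputable def divWeight (w : σ → ℕ) (d : σ →₀ ℕ) : σ →₀ ℕ :=
  equivFunOnFinite.symm fun i => d i / w i

theorem weight_divWeight_le_degree (w : σ → ℕ) (d : σ →₀ ℕ) :
    weight w (divWeight w d) ≤ d.degree := by
  rw [weight_apply, sum_fintype _ (fun i c => c • w i) fun _ => zero_smul _ _, degree_eq_sum]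
  exact Finset.sum_le_sum fun i _ => by simpa [divWeight] using Nat.div_mul_le_self (d i) (w i)

variable [DecidableEq σ]

variable (σ) in
def degreeLt (n : ℕ) : Finset (σ →₀ ℕ) :=
  (range n).biUnion (univ.finsuppAntidiag ·)

theorem mem_degreeLt {n : ℕ} {d : σ →₀ ℕ} : d ∈ degreeLt σ n ↔ d.degree < n := by
  simp [degreeLt, degree_eq_sum]

theorem card_degreeLt (m n : ℕ) : #(degreeLt (Fin (m + 1)) n) = (n + m).choose (m + 1) := by
  have hdisj : (range n : Set ℕ).PairwiseDisjoint
      (univ.finsuppAntidiag · : ℕ → Finset (Fin (m + 1) →₀ ℕ)) :=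
    fun i _ j _ hij => disjoint_left.2 fun d hi hj =>
      hij ((mem_finsuppAntidiag.1 hi).1.symm.trans (mem_finsuppAntidiag.1 hj).1)
  rw [degreeLt, card_biUnion hdisj]
  simp only [card_finsuppAntidiag_nat_eq_choose, card_univ, Fintype.card_fin]
  cases n with
  | zero => simp
  | succ n =>
    rw [show n + 1 + m = n + m + 1 by omega, ← Nat.sum_range_add_choose]
    refine Finset.sum_congr rfl fun j _ => ?_
    rw [show m + 1 + j - 1 = j + m by omega, Nat.choose_symm_add]

theorem card_degreeLt_le_prod_mul_card_image_divWeight {w : σ → ℕ} (hw : ∀ i, 0 < w i)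
    (n : ℕ) : #(degreeLt σ n) ≤ (∏ i, w i) * #((degreeLt σ n).image (divWeight w)) := by
  refine card_le_mul_card_image _ _ fun e _ => ?_
  have hprod : ∏ i, w i = #(Fintype.piFinset fun i => range (w i)) := by simp
  rw [hprod]
  refine card_le_card_of_injOn (fun d i => d i % w i) (fun d _ => ?_) fun d hd d' hd' hmod => ?_
  · simpa using fun i => Nat.mod_lt _ (hw i)
  · have hdiv : ∀ i, d i / w i = d' i / w i := fun i => by
      have hfiber := (mem_filter.1 hd).2.trans (mem_filter.1 hd').2.symm
      simpa [divWeight] using DFunLike.congr_fun hfiber i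
    ext i
    rw [← Nat.div_add_mod (d i) (w i), ← Nat.div_add_mod (d' i) (w i), hdiv i]
    exact congrArg _ (congr_fun hmod i)

end Finsupp

theorem Nat.pow_le_factorial_mul_choose (D s : ℕ) :
    D ^ (s + 1) ≤ (s + 1).factorial * (D + s).choose (s + 1) := by
  simpa [← Nat.descFactorial_eq_factorial_mul_choose] using
    Nat.pow_sub_le_descFactorial (D + s) (s + 1)

section Interpolation

variable {F σ ι : Type*} [Field F] [Fintype σ] [DecidableEq σ] [Fintype ι]

theorem exists_ne_zero_support_subset_hasZeroOfMultiplicity (S : Finset (σ →₀ ℕ)) (r : ℕ)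
    (p : ι → σ → F) (h : Fintype.card ι * #(Finsupp.degreeLt σ r) < #S) :
    ∃ Q : MvPolynomial σ F, Q ≠ 0 ∧ (Q.support : Set (σ →₀ ℕ)) ⊆ S ∧
      ∀ i, HasZeroOfMultiplicity Q r (p i) := by
  let V := restrictSupport F (S : Set (σ →₀ ℕ))
  let basisV := basisRestrictSupport F (S : Set (σ →₀ ℕ))
  have : FiniteDimensional F V := basisV.finiteDimensional_of_finite
  let lowCoeffs : V →ₗ[F] (ι × Finsupp.degreeLt σ r → F) := LinearMap.pi fun x =>
    lcoeff F x.2.1 ∘ₗ (aeval fun j => X j + C (p x.1 j)).toLinearMap ∘ₗ V.subtype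
  have hrank : Module.finrank F (ι × Finsupp.degreeLt σ r → F) < Module.finrank F V := by
    rw [Module.finrank_eq_card_basis basisV]
    simpa [Module.finrank_fintype_fun_eq_card] using h
  obtain ⟨⟨Q, hQS⟩, hQker, hQ0⟩ :=
    (Submodule.ne_bot_iff _).1 (LinearMap.ker_ne_bot_of_finrank_lt (f := lowCoeffs) hrank)
  refine ⟨Q, fun h => hQ0 (Subtype.ext h), hQS, fun i d hd => ?_⟩
  by_contra! hlow
  have hcoeff := congr_fun (LinearMap.mem_ker.1 hQker) (i, ⟨d, Finsupp.mem_degreeLt.2 hlow⟩)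
  exact (mem_support_iff.1 hd) hcoeff

end Interpolation

theorem stmt_17_general {F : Type*} [Field F] (s n0 r D k : ℕ)
    (hk : 1 ≤ k)
    (p : Fin n0 → Fin (s + 1) → F)
    (hcond : Nat.factorial (s + 1) * k ^ s * (n0 * Nat.choose (r + s) (s + 1))
        < D ^ (s + 1)) :
    ∃ Q : MvPolynomial (Fin (s + 1)) F, Q ≠ 0 ∧
      MvPolynomial.weightedTotalDegree
        (fun i : Fin (s + 1) => if i = 0 then 1 else k) Q ≤ D ∧
      ∀ i, HasZeroOfMultiplicity Q r (p i) := by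
  set w : Fin (s + 1) → ℕ := fun i => if i = 0 then 1 else k
  have hw : ∀ i, 0 < w i := fun i => by unfold w; split_ifs <;> omega
  have hprod : ∏ i, w i = k ^ s := by simp [w, Fin.prod_univ_succ, Fin.succ_ne_zero]
  set S := (Finsupp.degreeLt (Fin (s + 1)) D).image (Finsupp.divWeight w)
  have hS : (s + 1).factorial * k ^ s * (n0 * (r + s).choose (s + 1)) <
      (s + 1).factorial * k ^ s * #S := by
    calc _ < D ^ (s + 1) := hcond
      _ ≤ (s + 1).factorial * #(Finsupp.degreeLt (Fin (s + 1)) D) := by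
        rw [Finsupp.card_degreeLt]; exact Nat.pow_le_factorial_mul_choose D s
      _ ≤ (s + 1).factorial * (k ^ s * #S) := by
        rw [← hprod]; gcongr; exact Finsupp.card_degreeLt_le_prod_mul_card_image_divWeight hw D
      _ = _ := (Nat.mul_assoc _ _ _).symm
  obtain ⟨Q, hQ0, hQS, hQmult⟩ := exists_ne_zero_support_subset_hasZeroOfMultiplicity S r p (by
    rw [Fintype.card_fin, Finsupp.card_degreeLt]; exact Nat.lt_of_mul_lt_mul_left hS)
  refine ⟨Q, hQ0, Finset.sup_le fun d hd => ?_, hQmult⟩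
  obtain ⟨e, he, rfl⟩ := mem_image.1 (hQS hd)
  exact (Finsupp.weight_divWeight_le_degree w e).trans (Finsupp.mem_degreeLt.1 he).le

/-- Given `n0` points in `F^(s+1)` and parameters with
`D^(s+1)/((s+1)!·k^s) > n0 · C(r+s, s+1)`, there exists a nonzero polynomial
`Q(X, Y₁, …, Y_s)` of `(1,k,…,k)`-weighted degree at most `D` with a zero of
multiplicity `r` at each of the `n0` points. -/
theorem stmt_17 {F : Type*} [Field F] (s n0 r D k : ℕ) (hs : 1 ≤ s)
    (hr : 1 ≤ r) (hk : 1 ≤ k)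
    (p : Fin n0 → Fin (s + 1) → F)
    (hcond : Nat.factorial (s + 1) * k ^ s * (n0 * Nat.choose (r + s) (s + 1))
        < D ^ (s + 1)) :
    ∃ Q : MvPolynomial (Fin (s + 1)) F, Q ≠ 0 ∧
      MvPolynomial.weightedTotalDegree
        (fun i : Fin (s + 1) => if i = 0 then 1 else k) Q ≤ D ∧
      ∀ i, HasZeroOfMultiplicity Q r (p i) :=
  stmt_17_general s n0 r D k hk p hcond
end
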